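/- Let α > 0 and define R_α : ℂⁿ → ℂⁿ by R_α(z) = √α·z, with pull-back (R_α^* f)(z) = f(√α·z). Then for every f ∈ C^∞(ℂⁿ) and all m, ℓ, R, S one has the identity of extended reals ‖R_α^* f‖^{0,ℏ}_{m,ℓ,R,S} = ‖f‖^{0,αℏ}_{m,ℓ,R,S}. Consequently R_α^* restricts to a bijection from Ã_{0,αℏ} onto Ã_{0,ℏ}, and for all f, g ∈ Ã_{0,αℏ} it intertwines the Wick products: R_α^*(f ⋆_{αℏ} g) = (R_α^* f) ⋆_ℏ (R_α^* g). -/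

import Mathlib

open scoped ENNReal NNReal BigOperators
open Complex

noncomputable section

namespace WickPaper

/-- functions on ℂⁿ -/
abbrev Fn (n : ℕ) := (Fin n → ℂ) → ℂ

/-- |N| = N₁+⋯+Nₙ -/
def mAbs {n : ℕ} (N : Fin n → ℕ) : ℕ := ∑ i, N i

/-- N! = N₁!⋯Nₙ! -/
def mFact {n : ℕ} (N : Fin n → ℕ) : ℕ := ∏ i, Nat.factorial (N i)

/-- componentwise binomial coefficient -/
def mChoose {n : ℕ} (R I : Fin n → ℕ) : ℕ := ∏ i, Nat.choose (R i) (I i)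

/-- Wirtinger derivative ∂/∂zᵢ -/
def wderivZ {n : ℕ} (i : Fin n) (f : Fn n) : Fn n :=
  fun z => (1/2 : ℂ) *
    (fderiv ℝ f z (Pi.single i 1) - Complex.I * fderiv ℝ f z (Pi.single i Complex.I))

/-- Wirtinger derivative ∂/∂z̄ᵢ -/
def wderivZbar {n : ℕ} (i : Fin n) (f : Fn n) : Fn n :=
  fun z => (1/2 : ℂ) *
    (fderiv ℝ f z (Pi.single i 1) + Complex.I * fderiv ℝ f z (Pi.single i Complex.I))

/-- ∂^{|R|}/∂z^R -/
def wIterZ {n : ℕ} (R : Fin n → ℕ) (f : Fn n) : Fn n :=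
  (List.finRange n).foldr (fun i g => (wderivZ i)^[R i] g) f

/-- ∂^{|S|}/∂z̄^S -/
def wIterZbar {n : ℕ} (S : Fin n → ℕ) (f : Fn n) : Fn n :=
  (List.finRange n).foldr (fun i g => (wderivZbar i)^[S i] g) f

/-- iterated Wirtinger derivative ∂^{|R|+|S|} f/(∂z^R ∂z̄^S) -/
def wD {n : ℕ} (R S : Fin n → ℕ) (f : Fn n) : Fn n :=
  wIterZ R (wIterZbar S f)

/-- the base quantity h^{p,ℏ}_{0,0,R,S}(f) -/
def h0 {n : ℕ} (p : Fin n → ℂ) (ℏ : ℝ) (R S : Fin n → ℕ) (f : Fn n) : ℝ≥0∞ :=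
  ∑' N : Fin n → ℕ,
    ENNReal.ofReal ((2*ℏ)^(mAbs R + mAbs S + mAbs N)) / (mFact N : ℝ≥0∞) *
      (‖wD R (N + S) f p‖₊ : ℝ≥0∞)^2

/-- the recursively defined quantities h^{p,ℏ}_{m,ℓ,R,S}(f) ∈ [0,∞] -/
def hSem {n : ℕ} (p : Fin n → ℂ) (ℏ : ℝ) : ℕ → ℕ → (Fin n → ℕ) → (Fin n → ℕ) → Fn n → ℝ≥0∞
  | 0, _, R, S, f => h0 p ℏ R S f
  | (m+1), ℓ, R, S, f =>
    if ℓ % 2 = 0 then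
      ∑' N : Fin n → ℕ, (mFact N : ℝ≥0∞)⁻¹ *
        (∑ I ∈ Finset.Iic R, ∑ J ∈ Finset.Iic (N + S),
          ((mChoose R I * mChoose (N + S) J : ℕ) : ℝ≥0∞) * hSem p ℏ m (ℓ / 2) I J f) ^ 2
    else
      ∑' N : Fin n → ℕ, (mFact N : ℝ≥0∞)⁻¹ *
        (∑ I ∈ Finset.Iic R, ∑ J ∈ Finset.Iic (N + S),
          ((mChoose R I * mChoose (N + S) J : ℕ) : ℝ≥0∞) * hSem p ℏ m ((ℓ - 1) / 2) J I f) ^ 2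

/-- the seminorm ‖f‖^{p,ℏ}_{m,ℓ,R,S} = (h^{p,ℏ}_{m,ℓ,R,S}(f))^{1/2^{m+1}} ∈ [0,∞] -/
def wNorm {n : ℕ} (p : Fin n → ℂ) (ℏ : ℝ) (m ℓ : ℕ) (R S : Fin n → ℕ) (f : Fn n) : ℝ≥0∞ :=
  hSem p ℏ m ℓ R S f ^ (((2:ℝ)^(m+1))⁻¹)

/-- Ã_{p,ℏ}: smooth functions all of whose seminorms are finite -/
def tA {n : ℕ} (p : Fin n → ℂ) (ℏ : ℝ) : Set (Fn n) :=
  {f | ContDiff ℝ (⊤ : ℕ∞) f ∧ ∀ (m ℓ : ℕ) (R S : Fin n → ℕ), ℓ < 2^m → wNorm p ℏ m ℓ R S f < ⊤}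

/-- a single term of the Wick product series -/
def wickTerm {n : ℕ} (α : ℂ) (N : Fin n → ℕ) (f g : Fn n) : Fn n :=
  fun z => (2*α)^(mAbs N) / (mFact N : ℂ) * wIterZ N f z * wIterZbar N g z

/-- the Wick product f ⋆_α g -/
def wick {n : ℕ} (α : ℂ) (f g : Fn n) : Fn n :=
  fun z => ∑' N : Fin n → ℕ, wickTerm α N f g z



/-! ### Auxiliary development for the rescaling isomorphism -/

variable {n : ℕ}

/-- generic Wirtinger-type derivative -/
def wdg (ε : ℂ) (i : Fin n) (f : Fn n) : Fn n :=
  fun z => (1/2 : ℂ) *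
    (fderiv ℝ f z (Pi.single i 1) + ε * fderiv ℝ f z (Pi.single i Complex.I))

/-- scaling operator -/
def sc (c : ℝ) (f : Fn n) : Fn n := fun z => f (c • z)

lemma sc_smooth {c : ℝ} {f : Fn n} (hf : ContDiff ℝ (⊤ : ℕ∞) f) : ContDiff ℝ (⊤ : ℕ∞) (sc c f) :=
  hf.comp (contDiff_const_smul c)

lemma fderiv_sc (c : ℝ) (f : Fn n) (hf : ContDiff ℝ (⊤ : ℕ∞) f) (z v : Fin n → ℂ) :
    fderiv ℝ (sc c f) z v = c • fderiv ℝ f (c • z) v := by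
  have hL : (sc c f) = f ∘ ((c • ContinuousLinearMap.id ℝ (Fin n → ℂ)) : _ →L[ℝ] _) := rfl
  rw [hL, fderiv_comp z (hf.differentiable (by simp) _) (ContinuousLinearMap.differentiableAt _),
    ContinuousLinearMap.fderiv]
  simp [ContinuousLinearMap.comp_apply, map_smul]

lemma wdg_smooth (ε : ℂ) (i : Fin n) {f : Fn n} (hf : ContDiff ℝ (⊤ : ℕ∞) f) :
    ContDiff ℝ (⊤ : ℕ∞) (wdg ε i f) := by
  have h1 : ∀ v : Fin n → ℂ, ContDiff ℝ (⊤ : ℕ∞) (fun z => fderiv ℝ f z v) := fun v =>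
    (hf.fderiv_right (by simp)).clm_apply contDiff_const
  exact contDiff_const.mul ((h1 _).add (contDiff_const.mul (h1 _)))

lemma wdg_const_mul (ε : ℂ) (i : Fin n) (a : ℂ) {f : Fn n} (hf : ContDiff ℝ (⊤ : ℕ∞) f) :
    wdg ε i (fun z => a * f z) = fun z => a * wdg ε i f z := by
  funext z
  simp only [wdg]
  rw [fderiv_const_mul (hf.differentiable (by simp) z) a]
  simp only [ContinuousLinearMap.smul_apply, smul_eq_mul]
  ring

lemma wdg_sc (ε : ℂ) (i : Fin n) (c : ℝ) {f : Fn n} (hf : ContDiff ℝ (⊤ : ℕ∞) f) :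
    wdg ε i (sc c f) = fun z => (c : ℂ) * wdg ε i f (c • z) := by
  funext z
  simp only [wdg, fderiv_sc c f hf z, Complex.real_smul]
  ring

lemma wdg_iter_smooth (ε : ℂ) (i : Fin n) (k : ℕ) {f : Fn n} (hf : ContDiff ℝ (⊤ : ℕ∞) f) :
    ContDiff ℝ (⊤ : ℕ∞) ((wdg ε i)^[k] f) := by
  induction k generalizing f with
  | zero => exact hf
  | succ k ih => rw [Function.iterate_succ_apply]; exact ih (wdg_smooth ε i hf)

lemma wdg_iter_const_mul (ε : ℂ) (i : Fin n) (k : ℕ) (a : ℂ) {f : Fn n}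
    (hf : ContDiff ℝ (⊤ : ℕ∞) f) :
    (wdg ε i)^[k] (fun z => a * f z) = fun z => a * (wdg ε i)^[k] f z := by
  induction k with
  | zero => rfl
  | succ k ih =>
    rw [Function.iterate_succ_apply', ih, Function.iterate_succ_apply',
      wdg_const_mul ε i a (wdg_iter_smooth ε i k hf)]

lemma wdg_iter_sc (ε : ℂ) (i : Fin n) (k : ℕ) (c : ℝ) {f : Fn n} (hf : ContDiff ℝ (⊤ : ℕ∞) f) :
    (wdg ε i)^[k] (sc c f) = fun z => (c : ℂ)^k * (wdg ε i)^[k] f (c • z) := by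
  induction k with
  | zero => funext z; simp [sc]
  | succ k ih =>
    rw [Function.iterate_succ_apply', ih]
    have : (fun z => (c : ℂ)^k * (wdg ε i)^[k] f (c • z))
        = fun z => (c : ℂ)^k * sc c ((wdg ε i)^[k] f) z := rfl
    rw [this, wdg_const_mul ε i _ (sc_smooth (wdg_iter_smooth ε i k hf)),
      wdg_sc ε i c (wdg_iter_smooth ε i k hf)]
    funext z
    rw [Function.iterate_succ_apply']
    ring

lemma foldr_smooth (ε : ℂ) (l : List (Fin n)) (S : Fin n → ℕ) {f : Fn n}
    (hf : ContDiff ℝ (⊤ : ℕ∞) f) :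
    ContDiff ℝ (⊤ : ℕ∞) (l.foldr (fun i g => (wdg ε i)^[S i] g) f) := by
  induction l with
  | nil => exact hf
  | cons i l ih => exact wdg_iter_smooth ε i (S i) ih

lemma foldr_const_mul (ε : ℂ) (l : List (Fin n)) (S : Fin n → ℕ) (a : ℂ) {f : Fn n}
    (hf : ContDiff ℝ (⊤ : ℕ∞) f) :
    l.foldr (fun i g => (wdg ε i)^[S i] g) (fun z => a * f z)
      = fun z => a * l.foldr (fun i g => (wdg ε i)^[S i] g) f z := by
  induction l with
  | nil => rfl
  | cons i l ih =>
    simp only [List.foldr_cons, ih,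
      wdg_iter_const_mul ε i (S i) a (foldr_smooth ε l S hf)]

lemma foldr_sc (ε : ℂ) (l : List (Fin n)) (S : Fin n → ℕ) (c : ℝ) {f : Fn n}
    (hf : ContDiff ℝ (⊤ : ℕ∞) f) :
    l.foldr (fun i g => (wdg ε i)^[S i] g) (sc c f)
      = fun z => (c : ℂ)^((l.map S).sum) *
          l.foldr (fun i g => (wdg ε i)^[S i] g) f (c • z) := by
  induction l with
  | nil => funext z; simp [sc]
  | cons i l ih =>
    have hF := foldr_smooth ε l S (f := f) hf
    simp only [List.foldr_cons, ih]
    have h1 : (fun z => (c:ℂ)^((l.map S).sum) *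
        l.foldr (fun i g => (wdg ε i)^[S i] g) f (c • z))
        = fun z => (c:ℂ)^((l.map S).sum) *
          sc c (l.foldr (fun i g => (wdg ε i)^[S i] g) f) z := rfl
    rw [h1, wdg_iter_const_mul ε i (S i) _ (sc_smooth hF), wdg_iter_sc ε i (S i) c hF]
    funext z
    simp only [List.map_cons, List.sum_cons, pow_add]
    ring

lemma wderivZ_eq (i : Fin n) : wderivZ i = wdg (-Complex.I) i := by
  funext f z; simp only [wderivZ, wdg, neg_mul]; ring

lemma wderivZbar_eq (i : Fin n) : wderivZbar i = wdg Complex.I i := rfl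

lemma wIterZ_eq (R : Fin n → ℕ) (f : Fn n) :
    wIterZ R f = (List.finRange n).foldr (fun i g => (wdg (-Complex.I) i)^[R i] g) f := by
  simp only [wIterZ]; congr 1; funext i g; rw [wderivZ_eq]

lemma wIterZbar_eq (S : Fin n → ℕ) (f : Fn n) :
    wIterZbar S f = (List.finRange n).foldr (fun i g => (wdg Complex.I i)^[S i] g) f := rfl

lemma map_finRange_sum (S : Fin n → ℕ) : ((List.finRange n).map S).sum = mAbs S :=
  (Fin.sum_univ_def S).symm

lemma wIterZ_smooth (R : Fin n → ℕ) {f : Fn n} (hf : ContDiff ℝ (⊤ : ℕ∞) f) :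
    ContDiff ℝ (⊤ : ℕ∞) (wIterZ R f) := by
  rw [wIterZ_eq]; exact foldr_smooth _ _ _ hf

lemma wIterZbar_smooth (S : Fin n → ℕ) {f : Fn n} (hf : ContDiff ℝ (⊤ : ℕ∞) f) :
    ContDiff ℝ (⊤ : ℕ∞) (wIterZbar S f) := by
  rw [wIterZbar_eq]; exact foldr_smooth _ _ _ hf

lemma wIterZbar_sc (S : Fin n → ℕ) (c : ℝ) {f : Fn n} (hf : ContDiff ℝ (⊤ : ℕ∞) f) :
    wIterZbar S (sc c f) = fun z => (c : ℂ)^(mAbs S) * wIterZbar S f (c • z) := by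
  rw [wIterZbar_eq, wIterZbar_eq, foldr_sc _ _ _ _ hf, map_finRange_sum]

lemma wIterZ_sc (R : Fin n → ℕ) (c : ℝ) {f : Fn n} (hf : ContDiff ℝ (⊤ : ℕ∞) f) :
    wIterZ R (sc c f) = fun z => (c : ℂ)^(mAbs R) * wIterZ R f (c • z) := by
  rw [wIterZ_eq, wIterZ_eq, foldr_sc _ _ _ _ hf, map_finRange_sum]

lemma wIterZ_const_mul (R : Fin n → ℕ) (a : ℂ) {f : Fn n} (hf : ContDiff ℝ (⊤ : ℕ∞) f) :
    wIterZ R (fun z => a * f z) = fun z => a * wIterZ R f z := by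
  rw [wIterZ_eq, wIterZ_eq, foldr_const_mul _ _ _ _ hf]

lemma wD_sc (R S : Fin n → ℕ) (c : ℝ) {f : Fn n} (hf : ContDiff ℝ (⊤ : ℕ∞) f) :
    wD R S (sc c f) = fun z => (c : ℂ)^(mAbs R + mAbs S) * wD R S f (c • z) := by
  have hS := wIterZbar_smooth S hf
  rw [wD, wIterZbar_sc S c hf]
  have h1 : (fun z => (c:ℂ)^(mAbs S) * wIterZbar S f (c • z))
      = fun z => (c:ℂ)^(mAbs S) * sc c (wIterZbar S f) z := rfl
  rw [h1, wIterZ_const_mul R _ (sc_smooth hS), wIterZ_sc R c hS]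
  funext z
  rw [wD, pow_add]
  ring

lemma mAbs_add (N S : Fin n → ℕ) : mAbs (N + S) = mAbs N + mAbs S := by
  simp [mAbs, Finset.sum_add_distrib]

lemma nnnorm_key (α : ℝ) (hα : 0 < α) (k : ℕ) (A : ℂ) :
    ((‖((Real.sqrt α : ℝ) : ℂ)^k * A‖₊ : ℝ≥0∞))^2
      = ENNReal.ofReal (α^k) * (‖A‖₊ : ℝ≥0∞)^2 := by
  have h1 : (‖((Real.sqrt α : ℝ) : ℂ)^k‖₊ : ℝ≥0∞) = ENNReal.ofReal (Real.sqrt α ^ k) := by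
    rw [← enorm_eq_nnnorm, ← ofReal_norm]
    simp [_root_.abs_of_nonneg (Real.sqrt_nonneg α)]
  rw [nnnorm_mul, ENNReal.coe_mul, mul_pow, h1, ← ENNReal.ofReal_pow (by positivity),
    ← pow_mul, show k * 2 = 2 * k from by ring, pow_mul, Real.sq_sqrt hα.le]

lemma key (ℏ α : ℝ) (hℏ : 0 < ℏ) (hα : 0 < α) (k : ℕ) (b : ℝ≥0∞) (A : ℂ) :
    ENNReal.ofReal ((2*ℏ)^k) / b * ((‖((Real.sqrt α : ℝ) : ℂ)^k * A‖₊ : ℝ≥0∞))^2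
      = ENNReal.ofReal ((2*(α*ℏ))^k) / b * (‖A‖₊ : ℝ≥0∞)^2 := by
  rw [nnnorm_key α hα k A, div_eq_mul_inv, div_eq_mul_inv]
  rw [show ENNReal.ofReal ((2*ℏ)^k) * b⁻¹ * (ENNReal.ofReal (α^k) * (‖A‖₊ : ℝ≥0∞)^2)
      = (ENNReal.ofReal ((2*ℏ)^k) * ENNReal.ofReal (α^k)) * b⁻¹ * (‖A‖₊ : ℝ≥0∞)^2 from by
    ring]
  rw [← ENNReal.ofReal_mul (by positivity), ← mul_pow]
  ring_nf

lemma h0_sc (ℏ α : ℝ) (hℏ : 0 < ℏ) (hα : 0 < α) (R S : Fin n → ℕ) {f : Fn n}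
    (hf : ContDiff ℝ (⊤ : ℕ∞) f) :
    h0 (0 : Fin n → ℂ) ℏ R S (sc (Real.sqrt α) f) = h0 0 (α*ℏ) R S f := by
  unfold h0
  refine tsum_congr fun N => ?_
  rw [wD_sc R (N + S) (Real.sqrt α) hf]
  simp only [smul_zero, mAbs_add]
  rw [show mAbs R + (mAbs N + mAbs S) = mAbs R + mAbs S + mAbs N from by ring]
  exact key ℏ α hℏ hα _ _ _

lemma hSem_sc (ℏ α : ℝ) (hℏ : 0 < ℏ) (hα : 0 < α) {f : Fn n} (hf : ContDiff ℝ (⊤ : ℕ∞) f) :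
    ∀ (m ℓ : ℕ) (R S : Fin n → ℕ),
      hSem (0 : Fin n → ℂ) ℏ m ℓ R S (sc (Real.sqrt α) f) = hSem 0 (α*ℏ) m ℓ R S f := by
  intro m
  induction m with
  | zero => intro ℓ R S; exact h0_sc ℏ α hℏ hα R S hf
  | succ m ih =>
    intro ℓ R S
    by_cases h : ℓ % 2 = 0 <;> simp only [hSem, h, if_true, if_false, ih]

lemma wNorm_sc (ℏ α : ℝ) (hℏ : 0 < ℏ) (hα : 0 < α) (m ℓ : ℕ) (R S : Fin n → ℕ)
    {f : Fn n} (hf : ContDiff ℝ (⊤ : ℕ∞) f) :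
    wNorm (0 : Fin n → ℂ) ℏ m ℓ R S (sc (Real.sqrt α) f) = wNorm 0 (α*ℏ) m ℓ R S f := by
  unfold wNorm
  rw [hSem_sc ℏ α hℏ hα hf m ℓ R S]

lemma sc_eq_fun (c : ℝ) (f : Fn n) :
    (fun z : Fin n → ℂ => f (fun i => ((c : ℝ) : ℂ) * z i)) = sc c f := by
  funext z
  show f _ = f _
  congr 1

/-- rescaling isomorphism R_α^* : Ã_{0,αℏ} → Ã_{0,ℏ}. -/
theorem rescaling_isomorphism {n : ℕ} (hn : 1 ≤ n)
    (ℏ α : ℝ) (hℏ : 0 < ℏ) (hα : 0 < α) :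
    (∀ f : Fn n, ContDiff ℝ (⊤ : ℕ∞) f → ∀ (m ℓ : ℕ) (R S : Fin n → ℕ), ℓ < 2^m →
      wNorm (0 : Fin n → ℂ) ℏ m ℓ R S
          (fun z => f (fun i => ((Real.sqrt α : ℝ) : ℂ) * z i)) =
        wNorm (0 : Fin n → ℂ) (α*ℏ) m ℓ R S f) ∧
    Set.BijOn (fun f : Fn n => fun z => f (fun i => ((Real.sqrt α : ℝ) : ℂ) * z i))
      (tA 0 (α*ℏ)) (tA 0 ℏ) ∧
    (∀ f g : Fn n, f ∈ tA 0 (α*ℏ) → g ∈ tA 0 (α*ℏ) →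
      (fun z => wick ((α*ℏ : ℝ) : ℂ) f g (fun i => ((Real.sqrt α : ℝ) : ℂ) * z i)) =
        wick (ℏ : ℂ) (fun z => f (fun i => ((Real.sqrt α : ℝ) : ℂ) * z i))
          (fun z => g (fun i => ((Real.sqrt α : ℝ) : ℂ) * z i))) := by
  have hcpos : 0 < Real.sqrt α := Real.sqrt_pos.mpr hα
  have hmap : ∀ f : Fn n,
      (fun z : Fin n → ℂ => f (fun i => ((Real.sqrt α : ℝ) : ℂ) * z i))
        = sc (Real.sqrt α) f := fun f => sc_eq_fun _ f
  have hinv : ∀ g : Fn n, sc (Real.sqrt α) (sc (Real.sqrt α)⁻¹ g) = g := by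
    intro g
    funext z
    simp [sc, smul_smul, inv_mul_cancel₀ hcpos.ne']
  have hinv2 : ∀ f : Fn n, sc (Real.sqrt α)⁻¹ (sc (Real.sqrt α) f) = f := by
    intro f
    funext z
    simp [sc, smul_smul, mul_inv_cancel₀ hcpos.ne']
  refine ⟨?_, ⟨?_, ?_, ?_⟩, ?_⟩
  · intro f hf m ℓ R S _
    rw [hmap f]
    exact wNorm_sc ℏ α hℏ hα m ℓ R S hf
  · -- MapsTo
    intro f hf
    beta_reduce
    rw [hmap f]
    exact ⟨sc_smooth hf.1, fun m ℓ R S hl => by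
      rw [wNorm_sc ℏ α hℏ hα m ℓ R S hf.1]; exact hf.2 m ℓ R S hl⟩
  · -- InjOn
    intro f _ g _ h
    beta_reduce at h
    rw [hmap f, hmap g] at h
    have h2 := congrArg (sc (Real.sqrt α)⁻¹) h
    rwa [hinv2, hinv2] at h2
  · -- SurjOn
    intro g hg
    refine ⟨sc (Real.sqrt α)⁻¹ g, ⟨sc_smooth hg.1, fun m ℓ R S hl => ?_⟩, ?_⟩
    · rw [← wNorm_sc ℏ α hℏ hα m ℓ R S (sc_smooth hg.1), hinv g]
      exact hg.2 m ℓ R S hl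
    · beta_reduce
      rw [hmap (sc (Real.sqrt α)⁻¹ g)]
      exact hinv g
  · -- Wick intertwining
    intro f g hf hg
    rw [hmap f, hmap g]
    funext z
    have harg : (fun i : Fin n => ((Real.sqrt α : ℝ) : ℂ) * z i) = (Real.sqrt α) • z := by
      funext i
      rw [Pi.smul_apply, Complex.real_smul]
    show wick _ f g _ = _
    rw [harg]
    unfold wick
    refine tsum_congr fun N => ?_
    unfold wickTerm
    rw [wIterZ_sc N (Real.sqrt α) hf.1, wIterZbar_sc N (Real.sqrt α) hg.1]
    have hcc : ((Real.sqrt α : ℝ) : ℂ) * ((Real.sqrt α : ℝ) : ℂ) = ((α : ℝ) : ℂ) := by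
      rw [← Complex.ofReal_mul, Real.mul_self_sqrt hα.le]
    have hpow : ((2 : ℂ) * ((α * ℏ : ℝ) : ℂ))^(mAbs N)
        = (2 * (ℏ : ℂ))^(mAbs N) * ((Real.sqrt α : ℝ) : ℂ)^(mAbs N)
            * ((Real.sqrt α : ℝ) : ℂ)^(mAbs N) := by
      rw [mul_assoc, ← mul_pow, ← mul_pow]
      congr 1
      rw [mul_assoc, hcc]
      push_cast
      ring
    rw [hpow]
    ring

end WickPaper
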